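/- Let q be a prime number and l ≥ 2 an integer. There exists a rational number α with −1 ≤ α < 1 and α ∈ ℚ-KS(qˡ) if and only if l ≠ 2. Equivalently, the set (ℚ ∩ [−1, 1))-KS(qˡ) is empty if and only if l = 2. -/

import Mathlib

/-!
Write `α = n / d`. For `N = q ^ 2` the Korselt condition says `d q - n ∣ d q ^ 2 - n`, hence
`d q - n ∣ n (q - 1)`; when `-1 ≤ α < 1` the divisor exceeds `d (q - 1) ≥ |n| (q - 1)`, which
forces `n = 0`. For `N = q ^ (k + 2)` the base `α = 1 / q ^ k` works, since then
`d q - n = q ^ (k + 1) - 1` divides `d N - n = q ^ (2 k + 2) - 1`.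
-/

/-- `α` is an `N`-Korselt base: `α ≠ 0`, `α ≠ N`, and for every prime `p` dividing `N`,
`α.den * p - α.num` divides `α.den * N - α.num`. -/
def QKS (N : ℕ) (α : ℚ) : Prop :=
  α ≠ 0 ∧ α ≠ (N : ℚ) ∧
    ∀ p : ℕ, p.Prime → p ∣ N →
      ((α.den : ℤ) * p - α.num) ∣ ((α.den : ℤ) * N - α.num)

theorem qks_prime_pow_iff {q : ℕ} (hq : q.Prime) {l : ℕ} (hl : l ≠ 0) (α : ℚ) :
    QKS (q ^ l) α ↔ α ≠ 0 ∧ α ≠ ((q ^ l : ℕ) : ℚ) ∧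
      ((α.den : ℤ) * q - α.num) ∣ ((α.den : ℤ) * (q ^ l : ℕ) - α.num) := by
  refine and_congr_right fun _ => and_congr_right fun _ => ⟨fun h => h q hq (dvd_pow_self q hl), ?_⟩
  intro h p hp hpq
  rwa [(Nat.prime_dvd_prime_iff_eq hp hq).mp (hp.dvd_of_dvd_pow hpq)]

theorem Int.eq_zero_of_mul_sub_dvd_mul_sq_sub {d n q : ℤ} (hq : 1 < q) (hdn : -d ≤ n)
    (hnd : n < d) (h : d * q - n ∣ d * q ^ 2 - n) : n = 0 := by
  have hdvd : d * q - n ∣ n * (q - 1) := by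
    have := dvd_sub h (dvd_mul_left (d * q - n) q)
    rwa [show d * q ^ 2 - n - q * (d * q - n) = n * (q - 1) by ring] at this
  have hlt : |n * (q - 1)| < d * q - n := by
    rw [abs_mul, abs_of_pos (sub_pos.mpr hq)]
    nlinarith [abs_le.mpr ⟨hdn, hnd.le⟩]
  have hzero : n * (q - 1) = 0 := Int.eq_zero_of_abs_lt_dvd hdvd hlt
  exact (mul_eq_zero.mp hzero).resolve_right (sub_ne_zero.mpr hq.ne')

theorem not_qks_prime_sq {q : ℕ} (hq : q.Prime) {α : ℚ} (h₁ : -1 ≤ α) (h₂ : α < 1) :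
    ¬ QKS (q ^ 2) α := by
  rw [qks_prime_pow_iff hq two_ne_zero]
  rintro ⟨hα, -, hdvd⟩
  have hdn : -(α.den : ℤ) ≤ α.num := by
    simpa [neg_le] using Rat.num_le_denom_iff.mpr (neg_le.mp h₁)
  push_cast at hdvd
  exact hα (Rat.num_eq_zero.mp (Int.eq_zero_of_mul_sub_dvd_mul_sq_sub
    (by exact_mod_cast hq.one_lt) hdn (Rat.num_lt_denom_iff.mpr h₂) hdvd))

theorem qks_prime_pow_inv {q : ℕ} (hq : q.Prime) (k : ℕ) :
    QKS (q ^ (k + 2)) ((q ^ k : ℕ) : ℚ)⁻¹ := by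
  have hpos : 0 < q ^ k := pow_pos hq.pos k
  have hlt : ((q ^ k : ℕ) : ℚ) < (q ^ (k + 2) : ℕ) := by
    exact_mod_cast Nat.pow_lt_pow_right hq.one_lt (by omega)
  refine (qks_prime_pow_iff hq (by omega) _).mpr ⟨by positivity, ?_, ?_⟩
  · exact (lt_of_le_of_lt (inv_le_one_of_one_le₀ (by exact_mod_cast hpos))
      (lt_of_le_of_lt (by exact_mod_cast hpos) hlt)).ne
  · rw [Rat.inv_natCast_num_of_pos hpos, Rat.inv_natCast_den_of_pos hpos]
    exact ⟨(q : ℤ) ^ (k + 1) + 1, by push_cast; ring⟩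

theorem stmt_19 (q : ℕ) (hq : q.Prime) (l : ℕ) (hl : 2 ≤ l) :
    (∃ α : ℚ, -1 ≤ α ∧ α < 1 ∧ QKS (q ^ l) α) ↔ l ≠ 2 := by
  constructor
  · rintro ⟨α, h₁, h₂, hα⟩ rfl
    exact not_qks_prime_sq hq h₁ h₂ hα
  · intro hl2
    obtain ⟨k, rfl⟩ : ∃ k, l = k + 1 + 2 := ⟨l - 3, by omega⟩
    have hone : (1 : ℚ) < (q ^ (k + 1) : ℕ) := by
      exact_mod_cast Nat.one_lt_pow (by omega) hq.one_lt
    refine ⟨_, ?_, inv_lt_one_of_one_lt₀ hone, qks_prime_pow_inv hq (k + 1)⟩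
    exact (neg_nonpos.mpr zero_le_one).trans (by positivity)
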